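/- For every real z ≠ 0, the convolution of the quasi-Cauchy density with the standard normal density satisfies ∫_ℝ γ(u) φ(z − u) du = (2π)^{-1/2} z^{-2} (1 − e^{-z²/2}). -/

import Mathlib

open MeasureTheory Real Filter

/-- The standard normal density. -/
noncomputable def phi (x : ℝ) : ℝ := (Real.sqrt (2 * Real.pi))⁻¹ * Real.exp (-x ^ 2 / 2)

/-- The standard normal cumulative distribution function. -/
noncomputable def Phi (x : ℝ) : ℝ := ∫ t in Set.Iic x, phi t

/-- The upper tail of the standard normal distribution. -/
noncomputable def PhiBar (x : ℝ) : ℝ := 1 - Phi x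

/-- The quasi-Cauchy density. -/
noncomputable def quasiCauchy (u : ℝ) : ℝ :=
  (Real.sqrt (2 * Real.pi))⁻¹ * (1 - |u| * PhiBar |u| / phi u)

open Set

lemma sqrt_two_pi_pos : 0 < Real.sqrt (2 * Real.pi) :=
  Real.sqrt_pos.mpr (by positivity)

lemma phi_pos (x : ℝ) : 0 < phi x := by
  unfold phi; positivity

lemma phi_even (x : ℝ) : phi (-x) = phi x := by simp [phi]

lemma continuous_phi : Continuous phi := by
  unfold phi; fun_prop

lemma phi_eq (x : ℝ) : phi x = (Real.sqrt (2 * Real.pi))⁻¹ * Real.exp (-(1/2 : ℝ) * x ^ 2) := by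
  unfold phi; ring_nf

lemma integrable_phi : Integrable phi := by
  have h : Integrable (fun x : ℝ => Real.exp (-(1/2 : ℝ) * x ^ 2)) :=
    integrable_exp_neg_mul_sq (by norm_num)
  have := h.const_mul ((Real.sqrt (2 * Real.pi))⁻¹)
  exact this.congr (Filter.Eventually.of_forall fun x => (phi_eq x).symm)

lemma integral_phi : ∫ x : ℝ, phi x = 1 := by
  have h : ∫ x : ℝ, Real.exp (-(1/2 : ℝ) * x ^ 2) = Real.sqrt (Real.pi / (1/2)) :=
    integral_gaussian (1/2)
  have h2 : (Real.pi / (1/2 : ℝ)) = 2 * Real.pi := by ring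
  calc ∫ x : ℝ, phi x = ∫ x : ℝ, (Real.sqrt (2 * Real.pi))⁻¹ * Real.exp (-(1/2:ℝ) * x ^ 2) := by
        simp_rw [phi_eq]
    _ = (Real.sqrt (2 * Real.pi))⁻¹ * ∫ x : ℝ, Real.exp (-(1/2:ℝ) * x ^ 2) := by
        rw [integral_const_mul]
    _ = 1 := by rw [h, h2]; exact inv_mul_cancel₀ (ne_of_gt sqrt_two_pi_pos)

lemma hasDerivAt_phi (x : ℝ) : HasDerivAt phi (-x * phi x) x := by
  have h1 : HasDerivAt (fun x : ℝ => -x ^ 2 / 2) (-x) x := by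
    have := ((hasDerivAt_pow 2 x).neg).div_const 2
    refine this.congr_deriv ?_; push_cast; ring
  have h2 := (h1.exp).const_mul ((Real.sqrt (2 * Real.pi))⁻¹)
  refine h2.congr_deriv ?_
  unfold phi; ring

lemma hasDerivAt_Phi (x : ℝ) : HasDerivAt Phi (phi x) x := by
  have key : ∀ y : ℝ, Phi y = Phi 0 + ∫ t in (0:ℝ)..y, phi t := by
    intro y
    have := intervalIntegral.integral_Iic_sub_Iic (integrable_phi.integrableOn)
      (integrable_phi.integrableOn) (a := 0) (b := y)
    unfold Phi; linarith
  have h : HasDerivAt (fun y => Phi 0 + ∫ t in (0:ℝ)..y, phi t) (phi x) x := by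
    refine (hasDerivAt_const x (Phi 0)).add ?_ |>.congr_deriv (by ring)
    exact intervalIntegral.integral_hasDerivAt_right
      (integrable_phi.intervalIntegrable)
      (continuous_phi.stronglyMeasurableAtFilter _ _)
      continuous_phi.continuousAt
  exact h.congr_of_eventuallyEq (Filter.Eventually.of_forall key)

lemma continuous_Phi : Continuous Phi :=
  continuous_iff_continuousAt.mpr fun x => (hasDerivAt_Phi x).continuousAt

lemma hasDerivAt_PhiBar (x : ℝ) : HasDerivAt PhiBar (-phi x) x := by
  exact ((hasDerivAt_const x (1:ℝ)).sub (hasDerivAt_Phi x)).congr_deriv (by ring)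

lemma PhiBar_eq (x : ℝ) : PhiBar x = ∫ t in Set.Ioi x, phi t := by
  have := intervalIntegral.integral_Iic_add_Ioi (b := x) (f := phi) (μ := volume)
    integrable_phi.integrableOn integrable_phi.integrableOn
  rw [integral_phi] at this
  unfold PhiBar Phi; linarith

lemma PhiBar_nonneg (x : ℝ) : 0 ≤ PhiBar x := by
  rw [PhiBar_eq]
  exact setIntegral_nonneg measurableSet_Ioi fun t _ => (phi_pos t).le

lemma Phi_nonneg (x : ℝ) : 0 ≤ Phi x :=
  setIntegral_nonneg measurableSet_Iic fun t _ => (phi_pos t).le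

lemma Phi_tendsto_atTop : Tendsto Phi atTop (nhds 1) := by
  have := (aecover_Iic (μ := volume) (l := atTop) tendsto_id).integral_tendsto_of_countably_generated integrable_phi
  rwa [integral_phi] at this

lemma Phi_tendsto_atBot : Tendsto Phi atBot (nhds 0) := by
  have h := (aecover_Ioi (μ := volume) (l := atBot) (a := fun x : ℝ => x)
    tendsto_id).integral_tendsto_of_countably_generated integrable_phi
  rw [integral_phi] at h
  have h2 : Tendsto PhiBar atBot (nhds 1) := by
    refine h.congr fun x => (PhiBar_eq x).symm
  have := (tendsto_const_nhds (x := (1:ℝ)) (f := atBot)).sub h2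
  simpa [PhiBar] using this

lemma phi_tendsto_atTop : Tendsto phi atTop (nhds 0) := by
  have h1 : Tendsto (fun x : ℝ => x ^ 2 / 2) atTop atTop :=
    (tendsto_pow_atTop (two_ne_zero)).atTop_div_const (by norm_num)
  have h2 : Tendsto (fun x : ℝ => Real.exp (-(x ^ 2 / 2))) atTop (nhds 0) :=
    Real.tendsto_exp_neg_atTop_nhds_zero.comp h1
  have h3 := h2.const_mul ((Real.sqrt (2 * Real.pi))⁻¹)
  rw [mul_zero] at h3
  refine h3.congr fun x => ?_
  unfold phi; ring_nf

lemma phi_tendsto_atBot : Tendsto phi atBot (nhds 0) := by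
  have := phi_tendsto_atTop.comp tendsto_neg_atBot_atTop
  refine this.congr fun x => ?_
  simp [Function.comp, phi_even]

lemma integrable_mul_phi : Integrable (fun t : ℝ => t * phi t) := by
  have h := (integrable_mul_exp_neg_mul_sq (b := (1/2:ℝ)) (by norm_num)).const_mul
    ((Real.sqrt (2 * Real.pi))⁻¹)
  refine h.congr (Filter.Eventually.of_forall fun x => ?_)
  simp only [phi_eq]; ring

lemma integral_Ioi_mul_phi (u : ℝ) : ∫ t in Set.Ioi u, t * phi t = phi u := by
  have hderiv : ∀ x ∈ Set.Ici u, HasDerivAt (fun t => -phi t) (x * phi x) x := by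
    intro x _
    exact (hasDerivAt_phi x).neg.congr_deriv (by ring)
  have := integral_Ioi_of_hasDerivAt_of_tendsto' hderiv
    (integrable_mul_phi.integrableOn) (by simpa using phi_tendsto_atTop.neg)
  simpa using this

lemma mills {u : ℝ} (hu : 0 < u) : u * PhiBar u ≤ phi u := by
  have h1 : PhiBar u ≤ ∫ t in Set.Ioi u, (t / u) * phi t := by
    rw [PhiBar_eq]
    refine setIntegral_mono_on integrable_phi.integrableOn
      ((integrable_mul_phi.integrableOn).div_const u |>.congr ?_) measurableSet_Ioi ?_
    · refine Filter.Eventually.of_forall fun t => by ring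
    · intro t ht
      have htu : u ≤ t := (le_of_lt ht)
      have h2 : (1:ℝ) ≤ t / u := (one_le_div hu).mpr htu
      nlinarith [phi_pos t]
  have h2 : ∫ t in Set.Ioi u, (t / u) * phi t = phi u / u := by
    rw [show (fun t => (t / u) * phi t) = fun t => (t * phi t) / u by funext t; ring,
      integral_div, integral_Ioi_mul_phi]
  rw [h2] at h1
  calc u * PhiBar u ≤ u * (phi u / u) := by nlinarith
    _ = phi u := by field_simp

lemma Phi_neg (x : ℝ) : Phi (-x) = PhiBar x := by
  have h1 : Phi (-x) = ∫ t in Set.Iic (-x), phi (-t) := by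
    unfold Phi
    exact (setIntegral_congr_fun measurableSet_Iic (fun t _ => phi_even t)).symm
  rw [h1, integral_comp_neg_Iic, neg_neg, PhiBar_eq]

lemma PhiBar_neg (x : ℝ) : PhiBar (-x) = Phi x := by
  unfold PhiBar
  rw [Phi_neg]
  unfold PhiBar; ring

lemma mills' {u : ℝ} (hu : u < 0) : (-u) * Phi u ≤ phi u := by
  have := mills (u := -u) (by linarith)
  rwa [PhiBar_neg, phi_even] at this

lemma phi_mul_exp (z u : ℝ) : phi u * Real.exp (z * u) = Real.exp (z ^ 2 / 2) * phi (u - z) := by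
  unfold phi
  rw [mul_assoc, ← Real.exp_add, mul_comm (Real.exp (z ^ 2 / 2)), mul_assoc, ← Real.exp_add,
    show -u ^ 2 / 2 + z * u = -(u - z) ^ 2 / 2 + z ^ 2 / 2 by ring]

noncomputable def Gp (z u : ℝ) : ℝ :=
  PhiBar u * Real.exp (z * u) * (u / z - 1 / z ^ 2)
    + Real.exp (z ^ 2 / 2) * (-(phi (u - z) / z) + (1 - 1 / z ^ 2) * Phi (u - z))

noncomputable def Gm (z u : ℝ) : ℝ :=
  -(Phi u * Real.exp (z * u) * (u / z - 1 / z ^ 2))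
    + Real.exp (z ^ 2 / 2) * (-(phi (u - z) / z) + (1 - 1 / z ^ 2) * Phi (u - z))

lemma hasDerivAt_parts (z u : ℝ) :
    HasDerivAt (fun u : ℝ => Real.exp (z ^ 2 / 2) * (-(phi (u - z) / z) + (1 - 1 / z ^ 2) * Phi (u - z)))
      (Real.exp (z ^ 2 / 2) * (-((-(u - z) * phi (u - z)) / z) + (1 - 1 / z ^ 2) * phi (u - z))) u := by
  have hq : HasDerivAt (fun u : ℝ => phi (u - z)) (-(u - z) * phi (u - z)) u := by
    exact ((hasDerivAt_phi (u - z)).comp u ((hasDerivAt_id u).sub_const z)).congr_deriv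
      (by ring : -(u - z) * phi (u - z) * 1 = -(u - z) * phi (u - z))
  have hQ : HasDerivAt (fun u : ℝ => Phi (u - z)) (phi (u - z)) u := by
    exact ((hasDerivAt_Phi (u - z)).comp u ((hasDerivAt_id u).sub_const z)).congr_deriv (by ring)
  exact (((hq.div_const z).neg).add (hQ.const_mul (1 - 1 / z ^ 2))).const_mul _

lemma hasDerivAt_E (z u : ℝ) :
    HasDerivAt (fun u : ℝ => Real.exp (z * u)) (Real.exp (z * u) * z) u := by
  simpa using ((hasDerivAt_id u).const_mul z).exp

lemma hasDerivAt_L (z u : ℝ) :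
    HasDerivAt (fun u : ℝ => u / z - 1 / z ^ 2) (1 / z) u := by
  exact ((hasDerivAt_id u).div_const z).sub_const (1 / z ^ 2)

lemma hasDerivAt_Gp {z : ℝ} (hz : z ≠ 0) (u : ℝ) :
    HasDerivAt (Gp z) (u * PhiBar u * Real.exp (z * u)) u := by
  have h1 := ((hasDerivAt_PhiBar u).mul (hasDerivAt_E z u)).mul (hasDerivAt_L z u)
  have h := h1.add (hasDerivAt_parts z u)
  refine h.congr_deriv ?_
  simp only [Pi.mul_apply]
  have hK : Real.exp (z ^ 2 / 2) ≠ 0 := (Real.exp_pos _).ne'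
  have q_eq : phi (u - z) = phi u * Real.exp (z * u) / Real.exp (z ^ 2 / 2) := by
    rw [eq_div_iff hK]
    linear_combination (phi_mul_exp z u).symm
  rw [q_eq]
  field_simp
  ring

lemma hasDerivAt_Gm {z : ℝ} (hz : z ≠ 0) (u : ℝ) :
    HasDerivAt (Gm z) ((-u) * Phi u * Real.exp (z * u)) u := by
  have h1 := (((hasDerivAt_Phi u).mul (hasDerivAt_E z u)).mul (hasDerivAt_L z u)).neg
  have h := h1.add (hasDerivAt_parts z u)
  refine h.congr_deriv ?_
  simp only [Pi.mul_apply]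
  have hK : Real.exp (z ^ 2 / 2) ≠ 0 := (Real.exp_pos _).ne'
  have q_eq : phi (u - z) = phi u * Real.exp (z * u) / Real.exp (z ^ 2 / 2) := by
    rw [eq_div_iff hK]
    linear_combination (phi_mul_exp z u).symm
  rw [q_eq]
  field_simp
  ring

lemma tendsto_shift_atTop (z : ℝ) : Tendsto (fun u : ℝ => u - z) atTop atTop :=
  tendsto_atTop_add_const_right atTop (-z) tendsto_id

lemma tendsto_shift_atBot (z : ℝ) : Tendsto (fun u : ℝ => u - z) atBot atBot :=
  tendsto_atBot_add_const_right atBot (-z) tendsto_id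

lemma tendsto_q_atTop (z : ℝ) : Tendsto (fun u : ℝ => phi (u - z)) atTop (nhds 0) :=
  phi_tendsto_atTop.comp (tendsto_shift_atTop z)

lemma tendsto_q_atBot (z : ℝ) : Tendsto (fun u : ℝ => phi (u - z)) atBot (nhds 0) :=
  phi_tendsto_atBot.comp (tendsto_shift_atBot z)

lemma A_bound (z : ℝ) {u : ℝ} (hu : 0 < u) :
    u * PhiBar u * Real.exp (z * u) ≤ Real.exp (z ^ 2 / 2) * phi (u - z) := by
  rw [← phi_mul_exp z u]
  have := mills hu
  nlinarith [Real.exp_pos (z * u)]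

lemma A_bound' (z : ℝ) {u : ℝ} (hu : u ≤ 0) :
    (-u) * Phi u * Real.exp (z * u) ≤ Real.exp (z ^ 2 / 2) * phi (u - z) := by
  rw [← phi_mul_exp z u]
  rcases eq_or_lt_of_le hu with rfl | hu'
  · simpa using (phi_pos 0).le
  · have := mills' hu'
    nlinarith [Real.exp_pos (z * u)]

lemma tendsto_A_atTop (z : ℝ) :
    Tendsto (fun u : ℝ => u * PhiBar u * Real.exp (z * u)) atTop (nhds 0) := by
  have hg : Tendsto (fun u : ℝ => Real.exp (z ^ 2 / 2) * phi (u - z)) atTop (nhds 0) := by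
    simpa using (tendsto_q_atTop z).const_mul (Real.exp (z ^ 2 / 2))
  refine squeeze_zero' ?_ ?_ hg
  · filter_upwards [eventually_gt_atTop 0] with u hu
    have := PhiBar_nonneg u
    positivity
  · filter_upwards [eventually_gt_atTop 0] with u hu
    exact A_bound z hu

lemma tendsto_B_atTop (z : ℝ) :
    Tendsto (fun u : ℝ => PhiBar u * Real.exp (z * u)) atTop (nhds 0) := by
  have hg : Tendsto (fun u : ℝ => Real.exp (z ^ 2 / 2) * phi (u - z)) atTop (nhds 0) := by
    simpa using (tendsto_q_atTop z).const_mul (Real.exp (z ^ 2 / 2))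
  refine squeeze_zero' ?_ ?_ hg
  · filter_upwards [eventually_gt_atTop 0] with u hu
    have := PhiBar_nonneg u
    positivity
  · filter_upwards [eventually_ge_atTop 1] with u hu
    calc PhiBar u * Real.exp (z * u) ≤ u * PhiBar u * Real.exp (z * u) := by
          nlinarith [mul_nonneg (mul_nonneg (sub_nonneg.mpr hu) (PhiBar_nonneg u))
            (Real.exp_pos (z * u)).le]
      _ ≤ _ := A_bound z (by linarith)

lemma tendsto_A_atBot (z : ℝ) :
    Tendsto (fun u : ℝ => (-u) * Phi u * Real.exp (z * u)) atBot (nhds 0) := by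
  have hg : Tendsto (fun u : ℝ => Real.exp (z ^ 2 / 2) * phi (u - z)) atBot (nhds 0) := by
    simpa using (tendsto_q_atBot z).const_mul (Real.exp (z ^ 2 / 2))
  refine squeeze_zero' ?_ ?_ hg
  · filter_upwards [eventually_lt_atBot 0] with u hu
    have := Phi_nonneg u
    have : (0:ℝ) ≤ -u := by linarith
    positivity
  · filter_upwards [eventually_le_atBot 0] with u hu
    exact A_bound' z hu

lemma tendsto_B_atBot (z : ℝ) :
    Tendsto (fun u : ℝ => Phi u * Real.exp (z * u)) atBot (nhds 0) := by
  have hg : Tendsto (fun u : ℝ => Real.exp (z ^ 2 / 2) * phi (u - z)) atBot (nhds 0) := by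
    simpa using (tendsto_q_atBot z).const_mul (Real.exp (z ^ 2 / 2))
  refine squeeze_zero' ?_ ?_ hg
  · filter_upwards with u
    exact mul_nonneg (Phi_nonneg u) (Real.exp_pos _).le
  · filter_upwards [eventually_le_atBot (-1)] with u hu
    calc Phi u * Real.exp (z * u) ≤ (-u) * Phi u * Real.exp (z * u) := by
          nlinarith [mul_nonneg (mul_nonneg (by linarith : (0:ℝ) ≤ -u - 1) (Phi_nonneg u))
            (Real.exp_pos (z * u)).le]
      _ ≤ _ := A_bound' z (by linarith)

lemma tendsto_Gp (z : ℝ) :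
    Tendsto (Gp z) atTop (nhds (Real.exp (z ^ 2 / 2) * (1 - 1 / z ^ 2))) := by
  have h1 : Tendsto (fun u : ℝ => PhiBar u * Real.exp (z * u) * (u / z - 1 / z ^ 2)) atTop
      (nhds 0) := by
    have := ((tendsto_A_atTop z).mul_const (1 / z)).sub ((tendsto_B_atTop z).mul_const (1 / z ^ 2))
    rw [zero_mul, zero_mul, sub_zero] at this
    refine this.congr fun u => by ring
  have h2 : Tendsto (fun u : ℝ =>
      Real.exp (z ^ 2 / 2) * (-(phi (u - z) / z) + (1 - 1 / z ^ 2) * Phi (u - z))) atTop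
      (nhds (Real.exp (z ^ 2 / 2) * (-(0 / z) + (1 - 1 / z ^ 2) * 1))) := by
    exact ((((tendsto_q_atTop z).div_const z).neg).add
      ((Phi_tendsto_atTop.comp (tendsto_shift_atTop z)).const_mul (1 - 1 / z ^ 2))).const_mul _
  have := h1.add h2
  rw [zero_add] at this
  convert this using 2
  · rfl
  · norm_num

lemma tendsto_Gm (z : ℝ) : Tendsto (Gm z) atBot (nhds 0) := by
  have h1 : Tendsto (fun u : ℝ => -(Phi u * Real.exp (z * u) * (u / z - 1 / z ^ 2))) atBot
      (nhds 0) := by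
    have := ((tendsto_A_atBot z).mul_const (1 / z)).add
      ((tendsto_B_atBot z).mul_const (1 / z ^ 2))
    rw [zero_mul, zero_mul, add_zero] at this
    refine this.congr fun u => by ring
  have h2 : Tendsto (fun u : ℝ =>
      Real.exp (z ^ 2 / 2) * (-(phi (u - z) / z) + (1 - 1 / z ^ 2) * Phi (u - z))) atBot
      (nhds (Real.exp (z ^ 2 / 2) * (-(0 / z) + (1 - 1 / z ^ 2) * 0))) := by
    exact ((((tendsto_q_atBot z).div_const z).neg).add
      ((Phi_tendsto_atBot.comp (tendsto_shift_atBot z)).const_mul (1 - 1 / z ^ 2))).const_mul _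
  have := h1.add h2
  convert this using 2
  · rfl
  · norm_num

lemma integrable_Kq (z : ℝ) :
    Integrable (fun u : ℝ => Real.exp (z ^ 2 / 2) * phi (u - z)) :=
  (integrable_phi.comp_sub_right z).const_mul _

lemma integrableOn_A (z : ℝ) :
    IntegrableOn (fun u : ℝ => u * PhiBar u * Real.exp (z * u)) (Set.Ioi 0) := by
  refine Integrable.mono' ((integrable_Kq z).integrableOn) ?_ ?_
  · exact ((continuous_id.mul ((continuous_const.sub continuous_Phi))).mul
      (Real.continuous_exp.comp (continuous_const.mul continuous_id))).aestronglyMeasurable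
  · rw [MeasureTheory.ae_restrict_iff' measurableSet_Ioi]
    refine Filter.Eventually.of_forall fun u hu => ?_
    rw [Real.norm_eq_abs, abs_of_nonneg
      (mul_nonneg (mul_nonneg (le_of_lt hu) (PhiBar_nonneg u)) (Real.exp_pos _).le)]
    exact A_bound z hu

lemma integrableOn_A' (z : ℝ) :
    IntegrableOn (fun u : ℝ => (-u) * Phi u * Real.exp (z * u)) (Set.Iic 0) := by
  refine Integrable.mono' ((integrable_Kq z).integrableOn) ?_ ?_
  · exact ((continuous_neg.mul continuous_Phi).mul
      (Real.continuous_exp.comp (continuous_const.mul continuous_id))).aestronglyMeasurable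
  · rw [MeasureTheory.ae_restrict_iff' measurableSet_Iic]
    refine Filter.Eventually.of_forall fun u hu => ?_
    rw [Real.norm_eq_abs, abs_of_nonneg
      (mul_nonneg (mul_nonneg (by simpa using hu) (Phi_nonneg u)) (Real.exp_pos _).le)]
    exact A_bound' z hu

lemma integral_A (z : ℝ) (hz : z ≠ 0) :
    ∫ u in Set.Ioi (0:ℝ), u * PhiBar u * Real.exp (z * u)
      = Real.exp (z ^ 2 / 2) * (1 - 1 / z ^ 2) - Gp z 0 := by
  exact integral_Ioi_of_hasDerivAt_of_tendsto'
    (fun x _ => hasDerivAt_Gp hz x) (integrableOn_A z) (tendsto_Gp z)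

lemma integral_A' (z : ℝ) (hz : z ≠ 0) :
    ∫ u in Set.Iic (0:ℝ), (-u) * Phi u * Real.exp (z * u) = Gm z 0 - 0 := by
  exact integral_Iic_of_hasDerivAt_of_tendsto'
    (fun x _ => hasDerivAt_Gm hz x) (integrableOn_A' z) (tendsto_Gm z)

lemma sum_halves (z : ℝ) (hz : z ≠ 0) :
    (Gm z 0 - 0) + (Real.exp (z ^ 2 / 2) * (1 - 1 / z ^ 2) - Gp z 0)
      = 1 / z ^ 2 + Real.exp (z ^ 2 / 2) * (1 - 1 / z ^ 2) := by
  unfold Gm Gp PhiBar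
  simp only [mul_zero, Real.exp_zero]
  ring

/-- The convolution of the quasi-Cauchy density with the standard normal density. -/
theorem quasiCauchy_conv_normal (z : ℝ) (hz : z ≠ 0) :
    (∫ u : ℝ, quasiCauchy u * phi (z - u))
      = (Real.sqrt (2 * Real.pi))⁻¹ * (z ^ 2)⁻¹ * (1 - Real.exp (-z ^ 2 / 2)) := by
  set c := (Real.sqrt (2 * Real.pi))⁻¹ with hc
  have h1 : ∀ u : ℝ, phi (z - u) = Real.exp (-z ^ 2 / 2) * (phi u * Real.exp (z * u)) := by
    intro u
    rw [phi_mul_exp z u, ← mul_assoc, ← Real.exp_add,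
      show -z ^ 2 / 2 + z ^ 2 / 2 = 0 by ring, Real.exp_zero, one_mul, ← neg_sub u z, phi_even]
  have hpt : ∀ u : ℝ, quasiCauchy u * phi (z - u)
      = c * phi (z - u) - (c * Real.exp (-z ^ 2 / 2)) * (|u| * PhiBar |u| * Real.exp (z * u)) := by
    intro u
    have hne : phi u ≠ 0 := (phi_pos u).ne'
    have key : (1 - |u| * PhiBar |u| / phi u) * (Real.exp (-z ^ 2 / 2) * (phi u * Real.exp (z * u)))
        = Real.exp (-z ^ 2 / 2) * (phi u * Real.exp (z * u))
          - Real.exp (-z ^ 2 / 2) * (|u| * PhiBar |u| * Real.exp (z * u)) := by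
      field_simp
    unfold quasiCauchy
    rw [h1 u, mul_assoc, key, mul_sub]
    ring
  have heq1 : Set.EqOn (fun u : ℝ => (-u) * Phi u * Real.exp (z * u))
      (fun u : ℝ => |u| * PhiBar |u| * Real.exp (z * u)) (Set.Iic 0) := by
    intro u hu
    simp only
    rw [abs_of_nonpos hu, PhiBar_neg]
  have heq2 : Set.EqOn (fun u : ℝ => u * PhiBar u * Real.exp (z * u))
      (fun u : ℝ => |u| * PhiBar |u| * Real.exp (z * u)) (Set.Ioi 0) := by
    intro u hu
    simp only
    rw [abs_of_pos hu]
  have hgi1 : IntegrableOn (fun u : ℝ => |u| * PhiBar |u| * Real.exp (z * u)) (Set.Iic 0) :=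
    (integrableOn_A' z).congr_fun heq1 measurableSet_Iic
  have hgi2 : IntegrableOn (fun u : ℝ => |u| * PhiBar |u| * Real.exp (z * u)) (Set.Ioi 0) :=
    (integrableOn_A z).congr_fun heq2 measurableSet_Ioi
  have hgint : Integrable (fun u : ℝ => |u| * PhiBar |u| * Real.exp (z * u)) := by
    rw [← integrableOn_univ, ← Set.Iic_union_Ioi (a := (0:ℝ))]
    exact hgi1.union hgi2
  have hgval : (∫ u : ℝ, |u| * PhiBar |u| * Real.exp (z * u))
      = 1 / z ^ 2 + Real.exp (z ^ 2 / 2) * (1 - 1 / z ^ 2) := by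
    rw [← intervalIntegral.integral_Iic_add_Ioi hgi1 hgi2,
      ← setIntegral_congr_fun measurableSet_Iic heq1,
      ← setIntegral_congr_fun measurableSet_Ioi heq2,
      integral_A' z hz, integral_A z hz]
    exact sum_halves z hz
  have hphiz : (∫ u : ℝ, phi (z - u)) = 1 := by
    rw [MeasureTheory.integral_sub_left_eq_self phi volume z, integral_phi]
  have hint1 : Integrable (fun u : ℝ => phi (z - u)) :=
    (MeasureTheory.integrable_comp_sub_left phi z).mpr integrable_phi
  calc (∫ u : ℝ, quasiCauchy u * phi (z - u))
      = ∫ u : ℝ, (c * phi (z - u)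
          - (c * Real.exp (-z ^ 2 / 2)) * (|u| * PhiBar |u| * Real.exp (z * u))) := by
        simp_rw [hpt]
    _ = (∫ u : ℝ, c * phi (z - u))
          - ∫ u : ℝ, (c * Real.exp (-z ^ 2 / 2)) * (|u| * PhiBar |u| * Real.exp (z * u)) :=
        integral_sub (hint1.const_mul c) (hgint.const_mul _)
    _ = c * (∫ u : ℝ, phi (z - u))
          - (c * Real.exp (-z ^ 2 / 2)) * ∫ u : ℝ, |u| * PhiBar |u| * Real.exp (z * u) := by
        rw [integral_const_mul, integral_const_mul]
    _ = c * 1 - (c * Real.exp (-z ^ 2 / 2))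
          * (1 / z ^ 2 + Real.exp (z ^ 2 / 2) * (1 - 1 / z ^ 2)) := by
        rw [hphiz, hgval]
    _ = c * (z ^ 2)⁻¹ * (1 - Real.exp (-z ^ 2 / 2)) := by
        have heK : Real.exp (-z ^ 2 / 2) * Real.exp (z ^ 2 / 2) = 1 := by
          rw [← Real.exp_add, show -z ^ 2 / 2 + z ^ 2 / 2 = 0 by ring, Real.exp_zero]
        linear_combination (c / z ^ 2 - c) * heK
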